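/- arXiv:1210.1277 — 2 statements merged into one kernel-verified Lean document; each statement's English description precedes it below -/
import Mathlib

section
/- Let Ω be a domain in ℂ and let f₀, …, fₙ be holomorphic functions on Ω that are linearly independent over ℂ. Then there exists a set E ⊆ Ω that is discrete in Ω (has no accumulation points in Ω) such that for any complex numbers λ₀, …, λₙ not all zero, every point z₀ ∈ Ω at which the function g = Σⱼ λⱼ fⱼ vanishes together with its derivatives g', …, g⁽ⁿ⁾ belongs to E. -/
/-!
The exceptional set is the zero set of the Wronskian `W = det (f_j^{(k)}(z))_{k,j ≤ n}`: if
`∑ c_j f_j` has an `n`-deep zero at `z₀`, then `c` lies in the kernel of the Wronskian matrix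
at `z₀`. As `W` is holomorphic on the domain, its zeros are discrete once `W ≢ 0`. That `W ≢ 0`
follows by induction on `n`: on a ball where `f₀ ≠ 0`, the functions `(f_{i+1} / f₀)'` are again
linearly independent, and an `(n+1)`-deep zero of `∑ c_j f_j` at `w` gives an `n`-deep zero of
`∑ c_{i+1} (f_{i+1} / f₀)'` at `w`.
-/

open Complex Filter Topology

def LinIndepOn {𝕜 : Type*} [Semiring 𝕜] {m : ℕ} (f : Fin m → 𝕜 → 𝕜) (s : Set 𝕜) : Prop :=
  ∀ c : Fin m → 𝕜, (∀ z ∈ s, ∑ j, c j * f j z = 0) → c = 0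

noncomputable def wronskian {𝕜 : Type*} [NontriviallyNormedField 𝕜] {m : ℕ} (f : Fin m → 𝕜 → 𝕜)
    (z : 𝕜) : 𝕜 :=
  (Matrix.of fun k j : Fin m => iteratedDeriv k (f j) z).det

section NontriviallyNormedField

variable {𝕜 : Type*} [NontriviallyNormedField 𝕜] {m : ℕ}

theorem iteratedDeriv_fun_sum_const_mul {k : ℕ} {g : Fin m → 𝕜 → 𝕜} {z : 𝕜}
    (hg : ∀ i, ContDiffAt 𝕜 k (g i) z) (c : Fin m → 𝕜) :
    iteratedDeriv k (fun w => ∑ i, c i * g i w) z = ∑ i, c i * iteratedDeriv k (g i) z := by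
  rw [iteratedDeriv_fun_sum fun i _ => contDiffAt_const.mul (hg i)]
  simp only [iteratedDeriv_const_mul_field]

theorem deriv_fun_sum_const_mul {g : Fin m → 𝕜 → 𝕜} {z : 𝕜}
    (hg : ∀ i, DifferentiableAt 𝕜 (g i) z) (c : Fin m → 𝕜) :
    deriv (fun w => ∑ i, c i * g i w) z = ∑ i, c i * deriv (g i) z := by
  rw [deriv_fun_sum fun i _ => (hg i).const_mul (c i)]
  simp only [deriv_const_mul_field]

theorem AnalyticOnNhd.not_accPt_setOf_eq_zero {g : 𝕜 → 𝕜} {U : Set 𝕜} (hg : AnalyticOnNhd 𝕜 g U)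
    (hU : IsPreconnected U) {z₀ : 𝕜} (hz₀ : z₀ ∈ U) (hgz₀ : g z₀ ≠ 0) :
    ∀ z ∈ U, ¬ AccPt z (𝓟 {w ∈ U | g w = 0}) := fun _ hz hacc =>
  hgz₀ <| hg.eqOn_zero_of_preconnected_of_frequently_eq_zero hU hz
    ((accPt_iff_frequently_nhdsNE.1 hacc).mono fun _ hw => hw.2) hz₀

theorem LinIndepOn.of_isOpen_subset {f : Fin m → 𝕜 → 𝕜} {Ω D : Set 𝕜} (hind : LinIndepOn f Ω)
    (hf : ∀ j, AnalyticOnNhd 𝕜 (f j) Ω) (hΩ : IsPreconnected Ω) (hD : IsOpen D)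
    (hDne : D.Nonempty) (hDΩ : D ⊆ Ω) : LinIndepOn f D := by
  intro c hc
  obtain ⟨z, hz⟩ := hDne
  have hg : AnalyticOnNhd 𝕜 (fun w => ∑ j, c j * f j w) Ω := fun w hw => by
    have := fun j => hf j w hw
    fun_prop
  exact hind c fun w hw => hg.eqOn_zero_of_preconnected_of_eventuallyEq_zero hΩ (hDΩ hz)
    (eventually_of_mem (hD.mem_nhds hz) hc) hw

theorem AnalyticOnNhd.wronskian [CompleteSpace 𝕜] {f : Fin m → 𝕜 → 𝕜} {s : Set 𝕜}
    (hf : ∀ j, AnalyticOnNhd 𝕜 (f j) s) : AnalyticOnNhd 𝕜 (_root_.wronskian f) s := by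
  have hW : _root_.wronskian f = fun z => ∑ σ : Equiv.Perm (Fin m),
      ((Equiv.Perm.sign σ : ℤ) : 𝕜) * ∏ j, iteratedDeriv (σ j) (f j) z := by
    funext z
    simp [_root_.wronskian, Matrix.det_apply, Units.smul_def, zsmul_eq_mul]
  rw [hW]
  exact Finset.analyticOnNhd_fun_sum _ fun σ _ => analyticOnNhd_const.mul <|
    Finset.analyticOnNhd_fun_prod _ fun j _ => by
      rw [iteratedDeriv_eq_iterate]
      exact (hf j).iterated_deriv _

theorem wronskian_eq_zero_iff [CompleteSpace 𝕜] [CharZero 𝕜] {f : Fin m → 𝕜 → 𝕜} {z : 𝕜}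
    (hf : ∀ j, AnalyticAt 𝕜 (f j) z) :
    wronskian f z = 0 ↔
      ∃ c : Fin m → 𝕜, c ≠ 0 ∧ (m : ℕ∞) ≤ analyticOrderAt (fun w => ∑ j, c j * f j w) z := by
  rw [wronskian, ← Matrix.exists_mulVec_eq_zero_iff]
  refine exists_congr fun c => and_congr_right fun _ => ?_
  have hg : AnalyticAt 𝕜 (fun w => ∑ j, c j * f j w) z := by fun_prop
  rw [natCast_le_analyticOrderAt_iff_iteratedDeriv_eq_zero hg]
  simp only [funext_iff, Fin.forall_iff, Matrix.mulVec, dotProduct, Matrix.of_apply, Pi.zero_apply]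
  refine forall₂_congr fun k _ => ?_
  rw [iteratedDeriv_fun_sum_const_mul (fun j => (hf j).contDiffAt) c]
  simp only [mul_comm]

/-- Dividing by `f 0`, a unit near `w`, does not lower the order of vanishing at `w`, and
differentiating lowers it by exactly one. -/
theorem le_analyticOrderAt_sum_deriv_div [CompleteSpace 𝕜] [CharZero 𝕜]
    {f : Fin (m + 1) → 𝕜 → 𝕜} {w : 𝕜} (hf : ∀ j, AnalyticAt 𝕜 (f j) w) (h0 : f 0 w ≠ 0)
    {c : Fin (m + 1) → 𝕜}
    (hc : ((m + 1 : ℕ) : ℕ∞) ≤ analyticOrderAt (fun z => ∑ j, c j * f j z) w) :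
    (m : ℕ∞) ≤ analyticOrderAt
      (fun z => ∑ i : Fin m, c i.succ * deriv (fun v => f i.succ v / f 0 v) z) w := by
  set G := fun z => ∑ j, c j * f j z
  have hG : AnalyticAt 𝕜 G w := by fun_prop
  set H := fun z => G z / f 0 z
  have hH : AnalyticAt 𝕜 H w := hG.div (hf 0) h0
  have hGH : analyticOrderAt G w ≤ analyticOrderAt H w := by
    have : H = G * (f 0)⁻¹ := by funext; simp [H, div_eq_mul_inv]
    rw [this, analyticOrderAt_mul hG ((hf 0).inv h0)]
    exact le_self_add
  have hHw : H w = 0 :=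
    hH.analyticOrderAt_ne_zero.1 (lt_of_lt_of_le (by simp) (hc.trans hGH)).ne'
  have hHeq : H =ᶠ[𝓝 w] fun z => c 0 + ∑ i : Fin m, c i.succ * (f i.succ z / f 0 z) := by
    filter_upwards [(hf 0).continuousAt.eventually_ne h0] with z hz
    simp only [H, G, Fin.sum_univ_succ, add_div, Finset.sum_div, mul_div_assoc, div_self hz,
      mul_one]
  have hq : ∀ᶠ z in 𝓝 w, ∀ i : Fin m, AnalyticAt 𝕜 (fun v => f i.succ v / f 0 v) z :=
    eventually_all.2 fun i => ((hf i.succ).div (hf 0) h0).eventually_analyticAt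
  have hderiv : deriv H =ᶠ[𝓝 w]
      fun z => ∑ i : Fin m, c i.succ * deriv (fun v => f i.succ v / f 0 v) z := by
    filter_upwards [hHeq.deriv, hq] with z hz hzq
    rw [hz, deriv_const_add]
    exact deriv_fun_sum_const_mul (fun i => (hzq i).differentiableAt) _
  have hH' := hH.analyticOrderAt_deriv_add_one
  simp only [hHw, sub_zero] at hH'
  rw [← analyticOrderAt_congr hderiv, ← ENat.add_le_add_iff_right ENat.one_ne_top, hH']
  exact_mod_cast hc.trans hGH

end NontriviallyNormedField

section RCLike

variable {𝕜 : Type*} [RCLike 𝕜] {m : ℕ}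

theorem LinIndepOn.deriv_div {f : Fin (m + 1) → 𝕜 → 𝕜} {D : Set 𝕜} (hind : LinIndepOn f D)
    (hD : IsOpen D) (hDc : IsPreconnected D) (hf : ∀ j, AnalyticOnNhd 𝕜 (f j) D)
    (h0 : ∀ z ∈ D, f 0 z ≠ 0) :
    LinIndepOn (fun i : Fin m => deriv fun z => f i.succ z / f 0 z) D := by
  intro c hc
  have hq : ∀ i : Fin m, AnalyticOnNhd 𝕜 (fun z => f i.succ z / f 0 z) D :=
    fun i => (hf i.succ).div (hf 0) h0
  set u := fun z => ∑ i : Fin m, c i * (f i.succ z / f 0 z)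
  have hu : AnalyticOnNhd 𝕜 u D := fun z hz => by
    have := fun i => hq i z hz
    fun_prop
  obtain ⟨K, hK⟩ := hD.exists_is_const_of_deriv_eq_zero hDc hu.differentiableOn fun z hz =>
    (deriv_fun_sum_const_mul (fun i => (hq i z hz).differentiableAt) c).trans (hc z hz)
  have hd := hind (Fin.cons (-K) c) fun z hz => by
    have hsum : ∑ i : Fin m, c i * f i.succ z = u z * f 0 z := by
      simp only [u, Finset.sum_mul, mul_assoc, div_mul_cancel₀ _ (h0 z hz)]
    rw [Fin.sum_univ_succ]
    simp only [Fin.cons_zero, Fin.cons_succ]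
    rw [hsum, hK z hz]
    ring
  exact (Fin.tail_cons _ _).symm.trans (congrArg Fin.tail hd)

theorem LinIndepOn.exists_forall_le_analyticOrderAt_imp_eq_zero {Ω : Set 𝕜} (hΩ : IsOpen Ω)
    (hΩc : IsConnected Ω) {f : Fin m → 𝕜 → 𝕜} (hf : ∀ j, AnalyticOnNhd 𝕜 (f j) Ω)
    (hind : LinIndepOn f Ω) :
    ∃ z ∈ Ω, ∀ c : Fin m → 𝕜, (m : ℕ∞) ≤ analyticOrderAt (fun w => ∑ j, c j * f j w) z → c = 0 := by
  induction m generalizing Ω with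
  | zero =>
    obtain ⟨z, hz⟩ := hΩc.nonempty
    exact ⟨z, hz, fun c _ => Subsingleton.elim _ _⟩
  | succ m ih =>
    obtain ⟨z₁, hz₁, hfz₁⟩ : ∃ z ∈ Ω, f 0 z ≠ 0 := by
      by_contra! h
      exact one_ne_zero (congrFun (hind (Pi.single 0 1) fun z hz => by
        simp [Pi.single_apply, h z hz]) 0)
    obtain ⟨r, hr, hball⟩ := Metric.mem_nhds_iff.1 <|
      inter_mem (hΩ.mem_nhds hz₁) ((hf 0 z₁ hz₁).continuousAt.eventually_ne hfz₁)
    have hDΩ : Metric.ball z₁ r ⊆ Ω := fun z hz => (hball hz).1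
    have hD0 : ∀ z ∈ Metric.ball z₁ r, f 0 z ≠ 0 := fun z hz => (hball hz).2
    have hfD : ∀ j, AnalyticOnNhd 𝕜 (f j) (Metric.ball z₁ r) := fun j => (hf j).mono hDΩ
    have hindD := (hind.of_isOpen_subset hf hΩc.isPreconnected Metric.isOpen_ball
      ⟨z₁, Metric.mem_ball_self hr⟩ hDΩ).deriv_div Metric.isOpen_ball
      (Metric.isConnected_ball hr).isPreconnected hfD hD0
    obtain ⟨w, hwD, hw⟩ := ih Metric.isOpen_ball (Metric.isConnected_ball hr)
      (fun i => ((hfD i.succ).div (hfD 0) hD0).deriv) hindD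
    refine ⟨w, hDΩ hwD, fun c hc => ?_⟩
    have htail : Fin.tail c = 0 :=
      hw _ (le_analyticOrderAt_sum_deriv_div (fun j => hf j w (hDΩ hwD)) (hD0 w hwD) hc)
    have hc0 : c 0 = 0 := by
      have hG : AnalyticAt 𝕜 (fun z => ∑ j, c j * f j z) w := by
        have := fun j => hf j w (hDΩ hwD)
        fun_prop
      have hGw : ∑ j, c j * f j w = 0 :=
        hG.analyticOrderAt_ne_zero.1 (lt_of_lt_of_le (by simp) hc).ne'
      simpa [Fin.sum_univ_succ, show ∀ i : Fin m, c i.succ = 0 from congrFun htail, hD0 w hwD]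
        using hGw
    funext j
    exact Fin.cases hc0 (congrFun htail) j

theorem exists_wronskian_ne_zero {Ω : Set 𝕜} (hΩ : IsOpen Ω) (hΩc : IsConnected Ω)
    {f : Fin m → 𝕜 → 𝕜} (hf : ∀ j, AnalyticOnNhd 𝕜 (f j) Ω) (hind : LinIndepOn f Ω) :
    ∃ z ∈ Ω, wronskian f z ≠ 0 := by
  obtain ⟨z, hz, hzc⟩ := hind.exists_forall_le_analyticOrderAt_imp_eq_zero hΩ hΩc hf
  refine ⟨z, hz, fun hW => ?_⟩
  obtain ⟨c, hc, hord⟩ := (wronskian_eq_zero_iff fun j => hf j z hz).1 hW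
  exact hc (hzc c hord)

end RCLike

theorem stmt_0 (Ω : Set ℂ) (hΩopen : IsOpen Ω) (hΩconn : IsConnected Ω)
    (n : ℕ) (f : Fin (n + 1) → ℂ → ℂ)
    (hf : ∀ j, DifferentiableOn ℂ (f j) Ω)
    (hind : ∀ c : Fin (n + 1) → ℂ, (∀ z ∈ Ω, ∑ j, c j * f j z = 0) → c = 0) :
    ∃ E ⊆ Ω, (∀ z ∈ Ω, ¬ AccPt z (𝓟 E)) ∧
      ∀ c : Fin (n + 1) → ℂ, c ≠ 0 → ∀ z₀ ∈ Ω,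
        (∀ k ≤ n, iteratedDeriv k (fun z => ∑ j, c j * f j z) z₀ = 0) → z₀ ∈ E := by
  have hfa : ∀ j, AnalyticOnNhd ℂ (f j) Ω := fun j => (hf j).analyticOnNhd hΩopen
  obtain ⟨z₁, hz₁, hW⟩ := exists_wronskian_ne_zero hΩopen hΩconn hfa hind
  refine ⟨{z ∈ Ω | wronskian f z = 0}, fun z hz => hz.1,
    (AnalyticOnNhd.wronskian hfa).not_accPt_setOf_eq_zero hΩconn.isPreconnected hz₁ hW, ?_⟩
  intro c hc z₀ hz₀ hdeep
  have hg : AnalyticAt ℂ (fun z => ∑ j, c j * f j z) z₀ := by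
    have := fun j => hfa j z₀ hz₀
    fun_prop
  refine ⟨hz₀, (wronskian_eq_zero_iff fun j => hfa j z₀ hz₀).2 ⟨c, hc, ?_⟩⟩
  rw [natCast_le_analyticOrderAt_iff_iteratedDeriv_eq_zero hg]
  exact fun k hk => hdeep k (Nat.lt_succ_iff.1 hk)
end

section
/- Let a₀, …, aₙ be complex numbers, not all zero, and let d₀ < d₁ < ⋯ < dₙ be nonnegative integers. Then the polynomial P(z) = Σⱼ aⱼ z^{dⱼ} has no zero of multiplicity greater than n at any point z₀ ∈ ℂ with z₀ ≠ 0. That is, if z₀ ≠ 0 then not all of P(z₀), P'(z₀), …, P⁽ⁿ⁾(z₀) vanish. -/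
/-!
For `t` the lowest exponent of `p`, the operator `p ↦ X p' - t p` multiplies the coefficient of
`X^k` by `k - t`: it kills the lowest term of `p`, keeps all the others, and lowers the order of
vanishing at any point by at most one. Iterating, a polynomial with `s` terms vanishing to order
`m` at `z ≠ 0` yields a single monomial vanishing to order `m - (s - 1)` there; since a monomial
has no nonzero root, `m < s`.
-/

open Finset Polynomial

namespace Polynomial

section Euler

variable {R : Type*} [CommRing R]

theorem coeff_X_mul_derivative_sub_C_mul (p : R[X]) (t k : ℕ) :
    (X * derivative p - C (t : R) * p).coeff k = ((k : R) - t) * p.coeff k := by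
  cases k with
  | zero => simp
  | succ k =>
    rw [coeff_sub, coeff_X_mul, coeff_derivative, coeff_C_mul]
    push_cast
    ring

theorem pow_dvd_X_mul_derivative_sub_C_mul {p q : R[X]} {m : ℕ} (h : q ^ (m + 1) ∣ p) (c : R) :
    q ^ m ∣ X * derivative p - C c * p :=
  dvd_sub ((pow_sub_one_dvd_derivative_of_pow_dvd h).mul_left X)
    ((dvd_trans (pow_dvd_pow q m.le_succ) h).mul_left _)

theorem eval_monomial_ne_zero [NoZeroDivisors R] {k : ℕ} {c z : R} (hc : c ≠ 0) (hz : z ≠ 0) :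
    (monomial k c).eval z ≠ 0 := by
  rw [eval_monomial]
  exact mul_ne_zero hc (pow_ne_zero k hz)

variable [NoZeroDivisors R] [CharZero R]

theorem support_X_mul_derivative_sub_C_mul (p : R[X]) (t : ℕ) :
    (X * derivative p - C (t : R) * p).support = p.support.erase t := by
  ext k
  rw [mem_erase, mem_support_iff, mem_support_iff, coeff_X_mul_derivative_sub_C_mul,
    mul_ne_zero_iff, sub_ne_zero, Ne, Nat.cast_inj]

theorem lt_card_support_of_pow_dvd {p : R[X]} (hp : p ≠ 0) {z : R} (hz : z ≠ 0) {m : ℕ}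
    (h : (X - C z) ^ m ∣ p) : m < #p.support := by
  induction m generalizing p with
  | zero => exact card_pos.mpr (support_nonempty.mpr hp)
  | succ m ih =>
    set q := X * derivative p - C (p.natTrailingDegree : R) * p
    have hcard : #q.support + 1 = #p.support := by
      rw [support_X_mul_derivative_sub_C_mul]
      exact card_erase_add_one (natTrailingDegree_mem_support_of_nonzero hp)
    by_cases hq : q = 0
    · rw [hq, support_zero, card_empty, zero_add] at hcard
      obtain ⟨k, c, rfl⟩ := card_support_le_one_iff_monomial.mp hcard.ge
      have hroot : (monomial k c).IsRoot z :=
        dvd_iff_isRoot.mp (dvd_trans (dvd_pow_self _ m.succ_ne_zero) h)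
      exact absurd hroot (eval_monomial_ne_zero (by simpa using hp) hz)
    · have := ih hq (pow_dvd_X_mul_derivative_sub_C_mul h _)
      omega

theorem rootMultiplicity_lt_card_support {p : R[X]} (hp : p ≠ 0) {z : R} (hz : z ≠ 0) :
    p.rootMultiplicity z < #p.support :=
  lt_card_support_of_pow_dvd hp hz (pow_rootMultiplicity_dvd p z)

end Euler

section Fewnomial

variable {R ι : Type*} [CommRing R]

theorem coeff_sum_C_mul_X_pow (s : Finset ι) (a : ι → R) (d : ι → ℕ) (k : ℕ) :
    (∑ j ∈ s, C (a j) * X ^ d j).coeff k = ∑ j ∈ s with d j = k, a j := by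
  simp only [finsetSum_coeff, coeff_C_mul_X_pow, sum_filter, eq_comm]

theorem card_support_sum_C_mul_X_pow_le (s : Finset ι) (a : ι → R) (d : ι → ℕ) :
    #(∑ j ∈ s, C (a j) * X ^ d j).support ≤ #s := by
  classical
  calc #(∑ j ∈ s, C (a j) * X ^ d j).support ≤ #(s.image d) := by
        refine card_le_card fun k hk => ?_
        rw [mem_support_iff, coeff_sum_C_mul_X_pow] at hk
        obtain ⟨j, hj, -⟩ := exists_ne_zero_of_sum_ne_zero hk
        exact mem_image.mpr ⟨j, mem_filter.mp hj⟩
    _ ≤ #s := card_image_le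

theorem coeff_sum_C_mul_X_pow_of_injective {d : ι → ℕ} (hd : Function.Injective d)
    {s : Finset ι} (a : ι → R) {j : ι} (hj : j ∈ s) :
    (∑ i ∈ s, C (a i) * X ^ d i).coeff (d j) = a j := by
  rw [coeff_sum_C_mul_X_pow]
  exact sum_eq_single_of_mem j (mem_filter.mpr ⟨hj, rfl⟩) fun i hi hij =>
    absurd (hd (mem_filter.mp hi).2) hij

theorem sum_C_mul_X_pow_ne_zero {d : ι → ℕ} (hd : Function.Injective d) {s : Finset ι}
    {a : ι → R} {j : ι} (hj : j ∈ s) (ha : a j ≠ 0) :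
    ∑ i ∈ s, C (a i) * X ^ d i ≠ 0 := fun h =>
  ha (by rw [← coeff_sum_C_mul_X_pow_of_injective hd a hj, h, coeff_zero])

end Fewnomial

theorem iteratedDeriv_eval {𝕜 : Type*} [NontriviallyNormedField 𝕜] (p : 𝕜[X]) (k : ℕ) :
    iteratedDeriv k (fun x => p.eval x) = fun x => (derivative^[k] p).eval x := by
  induction k with
  | zero => simp
  | succ k ih =>
    rw [iteratedDeriv_succ, ih, Function.iterate_succ_apply']
    ext x
    exact Polynomial.deriv _

end Polynomial

theorem stmt_4 (n : ℕ) (a : Fin (n + 1) → ℂ) (ha : a ≠ 0)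
    (d : Fin (n + 1) → ℕ) (hd : StrictMono d) (z₀ : ℂ) (hz₀ : z₀ ≠ 0) :
    ∃ k ≤ n, iteratedDeriv k (fun z => ∑ j, a j * z ^ d j) z₀ ≠ 0 := by
  set P : ℂ[X] := ∑ j, C (a j) * X ^ d j
  have hP : (fun z => ∑ j, a j * z ^ d j) = fun z => P.eval z := by
    simp [P, eval_finsetSum]
  obtain ⟨j, hj⟩ := Function.ne_iff.mp ha
  have hP0 : P ≠ 0 := sum_C_mul_X_pow_ne_zero hd.injective (mem_univ j) hj
  by_contra! h
  have hmult : n < P.rootMultiplicity z₀ :=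
    (lt_rootMultiplicity_iff_isRoot_iterate_derivative hP0).mpr fun m hm => by
      simpa [hP, iteratedDeriv_eval] using h m hm
  have hterms : #P.support ≤ n + 1 := by
    simpa using card_support_sum_C_mul_X_pow_le univ a d
  have := rootMultiplicity_lt_card_support hP0 hz₀
  omega
end
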